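/- arXiv:2510.20249 — 4 statements merged into one kernel-verified Lean document; each statement's English description precedes it below -/
import Mathlib

section
/- Let B be holomorphic on the upper half-plane with |B(λ)| < 1 there, and assume the strict Schwarz–Pick inequality |B'(λ)| < (1 - |B(λ)|²)/(2 Im λ) holds for every λ in the upper half-plane. Then for each fixed u ∈ ℝ, the function v ↦ (1 - |B(u + iv)|²)/(2v) is strictly decreasing for v ∈ (0, ∞). -/
open Complex Set

/-!
Write `B_u(v) = B(u + iv)`. Then `χ(v) = g(v)/(2v)` with `g = 1 - |B_u|²`, and
`χ'(v) = (v g'(v) - g(v)) / (2v²)`. Since `B_u' = i B'`, the derivative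
`g' = -2 ⟪B_u, i B'⟫` is bounded by `2 |B| |B'| ≤ 2 |B'|`, so `v g'(v) ≤ 2 v |B'| < g(v)`
by the strict Schwarz–Pick inequality, and `χ' < 0`.
-/

theorem strictAntiOn_div_of_mul_deriv_lt {g g' : ℝ → ℝ} {c : ℝ} (hc : 0 < c)
    (hg : ∀ v > 0, HasDerivAt g (g' v) v) (hlt : ∀ v > 0, v * g' v < g v) :
    StrictAntiOn (fun v => g v / (c * v)) (Ioi 0) := by
  have hderiv : ∀ v > 0, HasDerivAt (fun v => g v / (c * v))
      ((g' v * (c * v) - g v * (c * 1)) / (c * v) ^ 2) v := fun v hv =>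
    (hg v hv).div ((hasDerivAt_id v).const_mul c) (by positivity)
  refine strictAntiOn_of_deriv_neg (convex_Ioi 0)
    (fun v hv => (hderiv v hv).continuousAt.continuousWithinAt) (fun v hv => ?_)
  rw [interior_Ioi, mem_Ioi] at hv
  rw [(hderiv v hv).deriv]
  apply div_neg_of_neg_of_pos _ (by positivity)
  nlinarith [hlt v hv]

theorem DifferentiableAt.hasDerivAt_comp_vertical {E : Type*} [NormedAddCommGroup E]
    [NormedSpace ℂ E] {B : ℂ → E} {u v : ℝ} (h : DifferentiableAt ℂ B (u + v * I)) :
    HasDerivAt (fun t : ℝ => B (u + t * I)) (I • deriv B (u + v * I)) v := by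
  have hline : HasDerivAt (fun t : ℝ => (u : ℂ) + t * I) I v := by
    simpa using ((hasDerivAt_id v).ofReal_comp.mul_const I).const_add (u : ℂ)
  exact h.hasDerivAt.scomp v hline

theorem neg_mul_two_inner_lt_one_sub_norm_sq {F : Type*} [NormedAddCommGroup F]
    [InnerProductSpace ℝ F] {w d : F} {t : ℝ} (ht : 0 ≤ t)
    (h : 2 * t * ‖d‖ < 1 - ‖w‖ ^ 2) :
    -(t * (2 * inner ℝ w d)) < 1 - ‖w‖ ^ 2 := by
  have hw : ‖w‖ ≤ 1 := by nlinarith [norm_nonneg w, norm_nonneg d]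
  have hinner : -inner ℝ w d ≤ ‖d‖ :=
    calc -inner ℝ w d ≤ ‖w‖ * ‖d‖ := (neg_le_abs _).trans (abs_real_inner_le_norm w d)
      _ ≤ ‖d‖ := mul_le_of_le_one_left (norm_nonneg d) hw
  nlinarith

theorem stmt1_general (B : ℂ → ℂ)
    (hB : DifferentiableOn ℂ B {z : ℂ | 0 < z.im})
    (hSP : ∀ z : ℂ, 0 < z.im →
      2 * z.im * ‖deriv B z‖ < 1 - ‖B z‖^2) :
    ∀ u : ℝ, StrictAntiOn
      (fun v : ℝ => (1 - ‖B (u + v * Complex.I)‖^2) / (2 * v))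
      (Set.Ioi (0 : ℝ)) := by
  intro u
  have him : ∀ v : ℝ, ((u : ℂ) + v * I).im = v := by simp
  refine strictAntiOn_div_of_mul_deriv_lt two_pos
    (g' := fun v => -(2 * inner ℝ (B (u + v * I)) (I • deriv B (u + v * I))))
    (fun v hv => ?_) (fun v hv => ?_)
  · have hdiff : DifferentiableAt ℂ B (u + v * I) :=
      hB.differentiableAt ((isOpen_lt continuous_const continuous_im).mem_nhds (by simpa [him]))
    exact hdiff.hasDerivAt_comp_vertical.norm_sq.const_sub 1
  · have hSPv := hSP (u + v * I) (by simpa [him])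
    rw [him] at hSPv
    rw [mul_neg]
    refine neg_mul_two_inner_lt_one_sub_norm_sq (le_of_lt hv) ?_
    rwa [norm_smul, norm_I, one_mul]

/-- If `B` is holomorphic on the upper half-plane with `|B| < 1` there and the strict
Schwarz–Pick inequality `2 (Im λ) |B'(λ)| < 1 - |B(λ)|²` holds, then for each `u ∈ ℝ`
the function `v ↦ (1 - |B(u+iv)|²)/(2v)` is strictly decreasing on `(0, ∞)`. -/
theorem stmt1 (B : ℂ → ℂ)
    (hB : DifferentiableOn ℂ B {z : ℂ | 0 < z.im})
    (hB1 : ∀ z : ℂ, 0 < z.im → ‖B z‖ < 1)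
    (hSP : ∀ z : ℂ, 0 < z.im →
      2 * z.im * ‖deriv B z‖ < 1 - ‖B z‖^2) :
    ∀ u : ℝ, StrictAntiOn
      (fun v : ℝ => (1 - ‖B (u + v * Complex.I)‖^2) / (2 * v))
      (Set.Ioi (0 : ℝ)) :=
  stmt1_general B hB hSP
end

section
/- Let B be holomorphic in a neighborhood of u ∈ ℝ with |B| = 1 on ℝ near u and B(u) = 1, and let θ be a real-analytic local phase (B = e^{iθ} on ℝ near u) with θ'(u) > 0. Then the limit ω(u) := lim_{ε→0+} [ 1/(4ε²) - |B'(u+iε)|²/(1 - |B(u+iε)|²)² ] exists and equals (1/4)[ (θ'(u))²/3 + (2/3)·θ'''(u)/θ'(u) - (θ''(u)/θ'(u))² ]. -/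
/-!
Reflection across `ℝ` upgrades `|B| = 1` on `ℝ` to `conj (B (conj z)) * B z = 1` near `u`
(identity theorem); differentiating, `conj (B' z) = -B' (conj z) / B (conj z) ^ 2`. With
`h = iε` the quantity therefore becomes
`B' (u + h) B' (u - h) / (B (u + h) - B (u - h)) ^ 2 - 1 / (4 h ^ 2)`, which only involves the
holomorphic function `B`. Expanding `B` to third order at `u`, this tends to `S B (u) / 6`, where
`S f = f''' / f' - 3/2 (f'' / f') ^ 2` is the Schwarzian derivative. Finally `B = e^{iθ}` on `ℝ`,
and `t ↦ e^{it}` has Schwarzian `1/2`, so `S B (u) = S θ (u) + θ' (u) ^ 2 / 2`.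
-/

open Complex Filter Set Asymptotics Topology ComplexConjugate
open scoped Nat

section Schwarzian

variable {𝕜 : Type*} [NontriviallyNormedField 𝕜]

theorem AnalyticAt.isBigO_sub_sum_iteratedDeriv [CharZero 𝕜] {E : Type*}
    [NormedAddCommGroup E] [NormedSpace 𝕜 E] [CompleteSpace E]
    {f : 𝕜 → E} {z : 𝕜} (hf : AnalyticAt 𝕜 f z) (n : ℕ) :
    (fun h => f (z + h) - ∑ i ∈ Finset.range n, (h ^ i / i !) • iteratedDeriv i f z)
      =O[𝓝 0] (· ^ n) := by
  have hshift : AnalyticAt 𝕜 (fun h => f (z + h)) 0 := by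
    rw [← add_zero z] at hf
    exact hf.comp_of_eq (by fun_prop) rfl
  obtain ⟨F, hF, hfF⟩ := hshift.exists_eq_sum_add_pow_mul n
  simp only [iteratedDeriv_comp_const_add, add_zero] at hfF
  have hrem : (fun h : 𝕜 => h ^ n • F h) =O[𝓝 0] (fun h => h ^ n • (1 : 𝕜)) :=
    (isBigO_refl _ _).smul (hF.continuousAt.tendsto.isBigO_one 𝕜)
  simpa [hfF] using hrem

theorem Asymptotics.IsBigO.comp_neg_pow {E : Type*} [SeminormedAddCommGroup E] {g : 𝕜 → E}
    {n : ℕ} (hg : g =O[𝓝 0] (· ^ n)) : (fun h => g (-h)) =O[𝓝 0] (· ^ n) :=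
  (hg.comp_tendsto (by simpa using (tendsto_neg (0 : 𝕜)))).trans
    (isBigO_of_le _ fun h => by simp [norm_pow])

theorem HasDerivAt.tendsto_centralDifference_div {f : 𝕜 → 𝕜} {f' z : 𝕜}
    (hf : HasDerivAt f f' z) :
    Tendsto (fun h => (f (z + h) - f (z - h)) / h) (𝓝[≠] 0) (𝓝 (2 * f')) := by
  have hD : HasDerivAt (fun h => f (z + h) - f (z - h)) (2 * f') 0 := by
    have h1 := HasDerivAt.comp_const_add z 0 (by rwa [add_zero])
    have h2 := HasDerivAt.comp_const_sub z 0 (by rwa [sub_zero])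
    exact (h1.fun_sub h2).congr_deriv (by ring)
  simpa [div_eq_inv_mul] using hD.tendsto_slope_zero

theorem AnalyticAt.isBigO_centralDifference_sq_sub [CharZero 𝕜] [CompleteSpace 𝕜]
    {f : 𝕜 → 𝕜} {z : 𝕜} (hf : AnalyticAt 𝕜 f z) :
    (fun h => (f (z + h) - f (z - h)) ^ 2
      - (2 * h * deriv f z + h ^ 3 / 3 * iteratedDeriv 3 f z) ^ 2) =O[𝓝 0] (· ^ 5) := by
  have hf4 := hf.isBigO_sub_sum_iteratedDeriv 4
  simp only [Finset.sum_range_succ, Finset.sum_range_zero, smul_eq_mul] at hf4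
  norm_num [Nat.factorial] at hf4
  have hf4' := hf4.comp_neg_pow
  simp only [← sub_eq_add_neg] at hf4'
  set P := fun h => 2 * h * deriv f z + h ^ 3 / 3 * iteratedDeriv 3 f z
  have hD : (fun h => (f (z + h) - f (z - h)) - P h) =O[𝓝 0] (· ^ 4) :=
    (hf4.sub hf4').congr_left fun h => by ring
  have hP : P =O[𝓝 0] (· ^ 1) :=
    ((isBigO_refl (· ^ 1) _).mul
      ((by fun_prop : Continuous fun h => 2 * deriv f z + h ^ 2 / 3 * iteratedDeriv 3 f z)
        |>.continuousAt.tendsto.isBigO_one 𝕜)).congr (fun h => by ring) (fun h => by ring)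
  have hsum : (fun h => (f (z + h) - f (z - h)) + P h) =O[𝓝 0] (· ^ 1) :=
    ((hD.trans (isLittleO_pow_pow (by norm_num : 1 < 4)).isBigO).add
      (hP.const_mul_left 2)).congr_left fun h => by ring
  exact (hD.mul hsum).congr (fun h => by ring) (fun h => by ring)

theorem AnalyticAt.isBigO_deriv_mul_deriv_sub [CharZero 𝕜] [CompleteSpace 𝕜]
    {f : 𝕜 → 𝕜} {z : 𝕜} (hf : AnalyticAt 𝕜 f z) :
    (fun h => deriv f (z + h) * deriv f (z - h)
      - (deriv f z + h * iteratedDeriv 2 f z + h ^ 2 / 2 * iteratedDeriv 3 f z)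
        * (deriv f z - h * iteratedDeriv 2 f z + h ^ 2 / 2 * iteratedDeriv 3 f z))
      =O[𝓝 0] (· ^ 3) := by
  have hf'3 := hf.deriv.isBigO_sub_sum_iteratedDeriv 3
  simp only [Finset.sum_range_succ, Finset.sum_range_zero, ← iteratedDeriv_succ',
    smul_eq_mul] at hf'3
  norm_num [Nat.factorial] at hf'3
  have hf'3' := hf'3.comp_neg_pow
  simp only [← sub_eq_add_neg] at hf'3'
  have hcont : Tendsto (fun h => deriv f (z - h)) (𝓝 0) (𝓝 (deriv f z)) :=
    hf.deriv.continuousAt.tendsto.comp (by simpa using (continuous_sub_left z).tendsto 0)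
  have hpoly : Continuous fun h =>
      deriv f z + h * iteratedDeriv 2 f z + h ^ 2 / 2 * iteratedDeriv 3 f z := by
    fun_prop
  exact (((hf'3.mul (hcont.isBigO_one 𝕜)).congr_right fun h => by ring).add
    (((hpoly.continuousAt.tendsto.isBigO_one 𝕜).mul hf'3').congr_right
      fun h => by ring)).congr_left fun h => by ring

theorem AnalyticAt.tendsto_centralDifference_sq_sub_mul_deriv_div_pow_four [CharZero 𝕜]
    [CompleteSpace 𝕜] {f : 𝕜 → 𝕜} {z : 𝕜} (hf : AnalyticAt 𝕜 f z) :
    Tendsto (fun h => ((f (z + h) - f (z - h)) ^ 2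
        - 4 * h ^ 2 * (deriv f (z + h) * deriv f (z - h))) / h ^ 4) (𝓝[≠] 0)
      (𝓝 (4 * iteratedDeriv 2 f z ^ 2 - 8 / 3 * deriv f z * iteratedDeriv 3 f z)) := by
  set c := 4 * iteratedDeriv 2 f z ^ 2 - 8 / 3 * deriv f z * iteratedDeriv 3 f z
  -- `h ^ 4 * c - h ^ 6 * (8 / 9 * f''' ^ 2)` is what the two truncated expansions give:
  -- `(2 h f' + h³ f''' / 3)² - 4 h² (f' + h f'' + h² f''' / 2) (f' - h f'' + h² f''' / 2)`.
  have hN : (fun h => ((f (z + h) - f (z - h)) ^ 2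
      - 4 * h ^ 2 * (deriv f (z + h) * deriv f (z - h)))
      - (h ^ 4 * c - h ^ 6 * (8 / 9 * iteratedDeriv 3 f z ^ 2))) =O[𝓝 0] (· ^ 5) :=
    (hf.isBigO_centralDifference_sq_sub.sub
      ((((isBigO_refl (· ^ 2) _).mul hf.isBigO_deriv_mul_deriv_sub).const_mul_left 4).congr_right
        fun h => by ring)).congr_left fun h => by ring
  have hrem := (hN.trans_isLittleO (isLittleO_pow_pow (by norm_num : 4 < 5))).tendsto_div_nhds_zero
  have hpoly : Tendsto (fun h : 𝕜 => c - h ^ 2 * (8 / 9 * iteratedDeriv 3 f z ^ 2))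
      (𝓝 0) (𝓝 c) := by
    simpa using ((continuous_pow 2).tendsto (0 : 𝕜)).mul_const _ |>.const_sub c
  refine (zero_add c ▸ (hrem.add hpoly).mono_left nhdsWithin_le_nhds).congr' ?_
  filter_upwards [self_mem_nhdsWithin] with h (hh : h ≠ 0)
  field_simp
  ring

noncomputable def schwarzian (f : 𝕜 → 𝕜) (x : 𝕜) : 𝕜 :=
  iteratedDeriv 3 f x / deriv f x - 3 / 2 * (iteratedDeriv 2 f x / deriv f x) ^ 2

theorem AnalyticAt.tendsto_deriv_mul_deriv_div_centralDifference_sq_sub [CharZero 𝕜]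
    [CompleteSpace 𝕜]
    {f : 𝕜 → 𝕜} {z : 𝕜} (hf : AnalyticAt 𝕜 f z) (hf' : deriv f z ≠ 0) :
    Tendsto (fun h => deriv f (z + h) * deriv f (z - h) / (f (z + h) - f (z - h)) ^ 2
        - 1 / (4 * h ^ 2)) (𝓝[≠] 0) (𝓝 (schwarzian f z / 6)) := by
  have hquot := hf.differentiableAt.hasDerivAt.tendsto_centralDifference_div
  have hlim := (hf.tendsto_centralDifference_sq_sub_mul_deriv_div_pow_four.neg).div
    (hquot.pow 2 |>.const_mul 4) (by simpa using hf')
  have hvalue : -(4 * iteratedDeriv 2 f z ^ 2 - 8 / 3 * deriv f z * iteratedDeriv 3 f z) /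
      (4 * (2 * deriv f z) ^ 2) = schwarzian f z / 6 := by
    unfold schwarzian; field_simp; ring
  rw [hvalue] at hlim
  refine hlim.congr' ?_
  filter_upwards [self_mem_nhdsWithin, hquot.eventually_ne (mul_ne_zero two_ne_zero hf')]
    with h (hh : h ≠ 0) hD
  have hD' : f (z + h) - f (z - h) ≠ 0 := fun h0 => hD (by simp [h0])
  simp only [Pi.div_apply]
  field_simp
  ring

end Schwarzian

theorem AnalyticAt.conj_comp_conj {f : ℂ → ℂ} {z : ℂ} (hf : AnalyticAt ℂ f (conj z)) :
    AnalyticAt ℂ (fun w => conj (f (conj w))) z := by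
  rw [analyticAt_iff_eventually_differentiableAt] at hf ⊢
  filter_upwards [(continuous_conj.tendsto z).eventually hf] with w hw
  exact differentiableAt_conj_conj_iff.mpr hw

theorem Complex.tendsto_ofReal_nhdsNE (x : ℝ) :
    Tendsto ((↑) : ℝ → ℂ) (𝓝[≠] x) (𝓝[≠] (x : ℂ)) :=
  tendsto_nhdsWithin_of_tendsto_nhds_of_eventually_within _
    (continuous_ofReal.continuousAt.mono_left nhdsWithin_le_nhds)
    (eventually_nhdsWithin_of_forall fun _ ht => by simpa using ht)

theorem Complex.tendsto_ofReal_mul_I_nhdsGT_zero :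
    Tendsto (fun ε : ℝ => (ε : ℂ) * I) (𝓝[>] 0) (𝓝[≠] 0) :=
  tendsto_nhdsWithin_of_tendsto_nhds_of_eventually_within _
    (by simpa using ((continuous_ofReal.mul_const I).tendsto 0).mono_left nhdsWithin_le_nhds)
    (eventually_nhdsWithin_of_forall fun ε (hε : 0 < ε) => by simp [hε.ne'])

theorem AnalyticAt.eventually_conj_comp_conj_mul_eq_one {f : ℂ → ℂ} {x : ℝ}
    (hf : AnalyticAt ℂ f x) (hunit : ∀ᶠ t : ℝ in 𝓝 x, ‖f t‖ = 1) :
    ∀ᶠ z in 𝓝 (x : ℂ), conj (f (conj z)) * f z = 1 := by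
  have hg : AnalyticAt ℂ (fun z => conj (f (conj z)) * f z) x :=
    (AnalyticAt.conj_comp_conj (by rwa [conj_ofReal])).mul hf
  rw [← hg.frequently_eq_iff_eventually_eq analyticAt_const]
  have hreal : ∀ᶠ t : ℝ in 𝓝[≠] x, conj (f (conj (t : ℂ))) * f t = 1 := by
    filter_upwards [hunit.filter_mono nhdsWithin_le_nhds] with t ht
    rw [conj_ofReal, mul_comm, mul_conj', ht]
    simp
  exact (tendsto_ofReal_nhdsNE x).frequently hreal.frequently

theorem AnalyticAt.eventually_conj_deriv_mul_add_eq_zero {f : ℂ → ℂ} {x : ℝ}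
    (hf : AnalyticAt ℂ f x) (hunit : ∀ᶠ t : ℝ in 𝓝 x, ‖f t‖ = 1) :
    ∀ᶠ z in 𝓝 (x : ℂ),
      conj (deriv f (conj z)) * f z + conj (f (conj z)) * deriv f z = 0 := by
  have hdiff := analyticAt_iff_eventually_differentiableAt.mp hf
  have hdiff_conj := (continuous_conj.tendsto' (x : ℂ) x (conj_ofReal x)).eventually hdiff
  filter_upwards [(hf.eventually_conj_comp_conj_mul_eq_one hunit).eventually_nhds, hdiff,
    hdiff_conj] with z hz hfz hfz'
  have hprod := (differentiableAt_conj_conj_iff.mpr hfz').hasDerivAt.mul hfz.hasDerivAt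
  simp only [deriv_conj_conj, Function.comp_apply] at hprod
  rw [← hprod.deriv]
  exact (EventuallyEq.deriv_eq (f := fun _ => 1) hz).trans (deriv_const _ _)

theorem AnalyticAt.eventually_ofReal_norm_deriv_sq_div_one_sub_norm_sq_sq {f : ℂ → ℂ}
    {x : ℝ} (hf : AnalyticAt ℂ f x) (hunit : ∀ᶠ t : ℝ in 𝓝 x, ‖f t‖ = 1) :
    ∀ᶠ w in 𝓝 (x : ℂ), ((‖deriv f w‖ ^ 2 / (1 - ‖f w‖ ^ 2) ^ 2 : ℝ) : ℂ)
      = -(deriv f w * deriv f (conj w)) / (f w - f (conj w)) ^ 2 := by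
  have hconj := continuous_conj.tendsto' (x : ℂ) x (conj_ofReal x)
  filter_upwards [hconj.eventually (hf.eventually_conj_comp_conj_mul_eq_one hunit),
    hconj.eventually (hf.eventually_conj_deriv_mul_add_eq_zero hunit)] with w h1 h2
  simp only [conj_conj] at h1 h2
  have ha : f (conj w) ≠ 0 := right_ne_zero_of_mul_eq_one h1
  have hb : conj (f w) = (f (conj w))⁻¹ := eq_inv_of_mul_eq_one_left h1
  have hb' : conj (deriv f w) = -(deriv f (conj w)) / f (conj w) ^ 2 := by
    rw [hb] at h2
    field_simp at h2 ⊢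
    linear_combination h2
  push_cast
  rw [← mul_conj', ← mul_conj', hb, hb']
  by_cases hba : f w - f (conj w) = 0
  · -- both denominators vanish, and `x / 0 = 0`
    rw [sub_eq_zero] at hba
    simp [hba, ha]
  · have hden : 1 - f w * (f (conj w))⁻¹ = -(f w - f (conj w)) / f (conj w) := by
      field_simp
      ring
    rw [hden]
    field_simp

theorem AnalyticAt.iteratedDeriv_ofReal_comp {f : ℂ → ℂ} {x : ℝ} (hf : AnalyticAt ℂ f x)
    (n : ℕ) : iteratedDeriv n (fun t : ℝ => f t) x = iteratedDeriv n f x := by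
  have hana : ∀ᶠ t : ℝ in 𝓝 x, AnalyticAt ℂ f t :=
    (continuous_ofReal.tendsto x).eventually hf.eventually_analyticAt
  suffices ∀ n, iteratedDeriv n (fun t : ℝ => f t) =ᶠ[𝓝 x] fun t => iteratedDeriv n f t
    from (this n).self_of_nhds
  intro n
  induction n with
  | zero => simp
  | succ n ih =>
    filter_upwards [ih.eventually_nhds, hana] with t ht hft
    rw [iteratedDeriv_succ, iteratedDeriv_succ, EventuallyEq.deriv_eq ht, iteratedDeriv_eq_iterate]
    exact ((hft.iterated_deriv n).differentiableAt.hasDerivAt.comp_ofReal).deriv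

theorem AnalyticAt.iteratedDeriv_eq_of_eventually_eq {f : ℂ → ℂ} {g : ℝ → ℂ} {x : ℝ}
    (hf : AnalyticAt ℂ f x) (hfg : ∀ᶠ t : ℝ in 𝓝 x, f t = g t) (n : ℕ) :
    iteratedDeriv n f x = iteratedDeriv n g x :=
  (hf.iteratedDeriv_ofReal_comp n).symm.trans (EventuallyEq.iteratedDeriv_eq n hfg)

section Phase

variable {θ : ℝ → ℝ} {u : ℝ}

theorem HasDerivAt.cexp_ofReal_mul_I {θ' : ℝ} (hθ : HasDerivAt θ θ' u) :
    HasDerivAt (fun t => cexp (θ t * I)) (θ' * I * cexp (θ u * I)) u := by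
  simpa [mul_comm] using (hθ.ofReal_comp.mul_const I).cexp

theorem AnalyticAt.eventually_deriv_cexp_ofReal_mul_I (hθ : AnalyticAt ℝ θ u) :
    deriv (fun t => cexp (θ t * I)) =ᶠ[𝓝 u] fun t => deriv θ t * I * cexp (θ t * I) := by
  filter_upwards [hθ.eventually_analyticAt] with t ht
  exact ht.differentiableAt.hasDerivAt.cexp_ofReal_mul_I.deriv

theorem AnalyticAt.eventually_iteratedDeriv_two_cexp_ofReal_mul_I (hθ : AnalyticAt ℝ θ u) :
    iteratedDeriv 2 (fun t => cexp (θ t * I))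
      =ᶠ[𝓝 u] fun t => (deriv (deriv θ) t * I - deriv θ t ^ 2) * cexp (θ t * I) := by
  filter_upwards [hθ.eventually_deriv_cexp_ofReal_mul_I.eventually_nhds,
    hθ.eventually_analyticAt] with t ht htθ
  rw [iteratedDeriv_succ, iteratedDeriv_one, EventuallyEq.deriv_eq ht]
  have := (htθ.deriv.differentiableAt.hasDerivAt.ofReal_comp.mul_const I).fun_mul
    htθ.differentiableAt.hasDerivAt.cexp_ofReal_mul_I
  rw [this.deriv]
  linear_combination ((deriv θ t : ℝ) : ℂ) ^ 2 * cexp (θ t * I) * I_sq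

theorem AnalyticAt.iteratedDeriv_three_cexp_ofReal_mul_I (hθ : AnalyticAt ℝ θ u) :
    iteratedDeriv 3 (fun t => cexp (θ t * I)) u
      = (deriv (deriv (deriv θ)) u * I - 3 * deriv θ u * deriv (deriv θ) u
        - deriv θ u ^ 3 * I) * cexp (θ u * I) := by
  rw [iteratedDeriv_succ, hθ.eventually_iteratedDeriv_two_cexp_ofReal_mul_I.deriv_eq]
  have h2 := hθ.deriv.deriv.differentiableAt.hasDerivAt.ofReal_comp.mul_const I
  have h1 := hθ.deriv.differentiableAt.hasDerivAt.ofReal_comp.fun_pow 2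
  have := (h2.fun_sub h1).fun_mul hθ.differentiableAt.hasDerivAt.cexp_ofReal_mul_I
  rw [this.deriv]
  push_cast
  linear_combination
    ((deriv θ u : ℝ) : ℂ) * ((deriv (deriv θ) u : ℝ) : ℂ) * cexp (θ u * I) * I_sq

theorem deriv_eq_of_eventually_eq_cexp {B : ℂ → ℂ} (hB : AnalyticAt ℂ B u)
    (hθ : AnalyticAt ℝ θ u) (hphase : ∀ᶠ x : ℝ in 𝓝 u, B x = cexp (θ x * I)) :
    deriv B u = deriv θ u * I * cexp (θ u * I) := by
  simpa only [iteratedDeriv_one, hθ.eventually_deriv_cexp_ofReal_mul_I.eq_of_nhds] using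
    hB.iteratedDeriv_eq_of_eventually_eq hphase 1

theorem schwarzian_eq_of_eventually_eq_cexp {B : ℂ → ℂ} (hB : AnalyticAt ℂ B u)
    (hθ : AnalyticAt ℝ θ u) (hphase : ∀ᶠ x : ℝ in 𝓝 u, B x = cexp (θ x * I)) :
    schwarzian B u = ((schwarzian θ u + deriv θ u ^ 2 / 2 : ℝ) : ℂ) := by
  rw [schwarzian, schwarzian, deriv_eq_of_eventually_eq_cexp hB hθ hphase,
    hB.iteratedDeriv_eq_of_eventually_eq hphase, hB.iteratedDeriv_eq_of_eventually_eq hphase,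
    hθ.iteratedDeriv_three_cexp_ofReal_mul_I,
    hθ.eventually_iteratedDeriv_two_cexp_ofReal_mul_I.eq_of_nhds]
  simp only [iteratedDeriv_succ, iteratedDeriv_zero]
  push_cast
  by_cases hθ' : deriv θ u = 0
  · -- both sides divide by `0`
    simp [hθ']
  · have hθ'C : ((deriv θ u : ℝ) : ℂ) ≠ 0 := ofReal_ne_zero.mpr hθ'
    field_simp
    linear_combination (-3 * ((deriv θ u : ℝ) : ℂ) ^ 4) * I_sq

end Phase

theorem stmt13_general (B : ℂ → ℂ) (u : ℝ)
    (hB : ∃ U : Set ℂ, IsOpen U ∧ (u : ℂ) ∈ U ∧ DifferentiableOn ℂ B U)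
    (θ : ℝ → ℝ) (hθ : AnalyticAt ℝ θ u) (hθ' : 0 < deriv θ u)
    (hphase : ∀ᶠ x : ℝ in nhds u, B (x : ℂ) = Complex.exp ((θ x : ℂ) * Complex.I))
    (huni : ∀ᶠ x : ℝ in nhds u, ‖B (x : ℂ)‖ = 1) :
    Tendsto (fun ε : ℝ =>
        1 / (4 * ε^2) -
          (‖deriv B ((u : ℂ) + ε * Complex.I)‖)^2 /
            (1 - (‖B ((u : ℂ) + ε * Complex.I)‖)^2)^2)
      (nhdsWithin 0 (Set.Ioi 0))
      (nhds ((1 / 4) * ((deriv θ u)^2 / 3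
        + (2 / 3) * (deriv (deriv (deriv θ)) u / deriv θ u)
        - (deriv (deriv θ) u / deriv θ u)^2))) := by
  obtain ⟨U, hU, huU, hBU⟩ := hB
  have hBa : AnalyticAt ℂ B u := hBU.analyticAt (hU.mem_nhds huU)
  have hB' : deriv B u ≠ 0 := by
    rw [deriv_eq_of_eventually_eq_cexp hBa hθ hphase]
    exact mul_ne_zero (mul_ne_zero (ofReal_ne_zero.mpr hθ'.ne') I_ne_zero) (exp_ne_zero _)
  have hvalue : schwarzian B u / 6 = ((1 / 4 * ((deriv θ u) ^ 2 / 3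
      + 2 / 3 * (deriv (deriv (deriv θ)) u / deriv θ u)
      - (deriv (deriv θ) u / deriv θ u) ^ 2) : ℝ) : ℂ) := by
    rw [schwarzian_eq_of_eventually_eq_cexp hBa hθ hphase, schwarzian]
    simp only [iteratedDeriv_succ, iteratedDeriv_zero]
    push_cast
    ring
  have hw : Tendsto (fun ε : ℝ => (u : ℂ) + ε * I) (𝓝[>] 0) (𝓝 (u : ℂ)) := by
    simpa using (tendsto_ofReal_mul_I_nhdsGT_zero.mono_right nhdsWithin_le_nhds).const_add (u : ℂ)
  rw [← tendsto_ofReal_iff, ← hvalue]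
  refine ((hBa.tendsto_deriv_mul_deriv_div_centralDifference_sq_sub hB').comp
    tendsto_ofReal_mul_I_nhdsGT_zero).congr' ?_
  filter_upwards [hw.eventually (hBa.eventually_ofReal_norm_deriv_sq_div_one_sub_norm_sq_sq huni)]
    with ε hε
  have hconj : conj ((u : ℂ) + ε * I) = u - ε * I := by simp [sub_eq_add_neg]
  rw [Function.comp_apply, ofReal_sub, hε, hconj]
  push_cast
  rw [mul_pow, I_sq]
  ring

/-- Boundary value of the curvature function: if `B` is holomorphic near `u ∈ ℝ`,
unimodular on `ℝ` near `u`, `B(u) = 1`, with real-analytic local phase `θ`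
satisfying `θ'(u) > 0`, then
`lim_{ε→0⁺} [1/(4ε²) - |B'(u+iε)|²/(1-|B(u+iε)|²)²]`
equals `(1/4)[(θ'(u))²/3 + (2/3) θ'''(u)/θ'(u) - (θ''(u)/θ'(u))²]`. -/
theorem stmt13 (B : ℂ → ℂ) (u : ℝ)
    (hB : ∃ U : Set ℂ, IsOpen U ∧ (u : ℂ) ∈ U ∧ DifferentiableOn ℂ B U)
    (hBu : B (u : ℂ) = 1)
    (θ : ℝ → ℝ) (hθ : AnalyticAt ℝ θ u) (hθ' : 0 < deriv θ u)
    (hphase : ∀ᶠ x : ℝ in nhds u, B (x : ℂ) = Complex.exp ((θ x : ℂ) * Complex.I))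
    (huni : ∀ᶠ x : ℝ in nhds u, ‖B (x : ℂ)‖ = 1) :
    Tendsto (fun ε : ℝ =>
        1 / (4 * ε^2) -
          (‖deriv B ((u : ℂ) + ε * Complex.I)‖)^2 /
            (1 - (‖B ((u : ℂ) + ε * Complex.I)‖)^2)^2)
      (nhdsWithin 0 (Set.Ioi 0))
      (nhds ((1 / 4) * ((deriv θ u)^2 / 3
        + (2 / 3) * (deriv (deriv (deriv θ)) u / deriv θ u)
        - (deriv (deriv θ) u / deriv θ u)^2))) :=
  stmt13_general B u hB θ hθ hθ' hphase huni
end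

section
/- If θ(u) = b·u with b > 0 (linear phase function), then the curvature function ω(u) = (1/4)[ (θ')²/3 + (2/3)θ'''/θ' - (θ''/θ')² ] is the constant b²/12. Conversely, if θ : ℝ → ℝ is C³ with θ' > 0 and ω(u) is constant equal to c > 0, and additionally θ''(0) = 0, θ'(0) = √(12c), then θ(u) = θ(0) + √(12c)·u. -/
/-!
The curvature equation `ω(θ) = c` is, in terms of `f = θ'`, the second-order autonomous ODE
`2 f'' f² = 12 c f³ - f⁵ + 3 f'² f`, which has the first integral `E = f'²/f³ + 12c/f + f`.
With `s = √(12c)` the initial data give `E = 2s`, and multiplying `E = 2s` by `f³` yields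
`f'² + f² (f - s)² = 0`; hence `θ' ≡ s`.
-/

open Real

noncomputable def phaseCurvature (θ : ℝ → ℝ) (u : ℝ) : ℝ :=
  (1 / 4) * ((deriv θ u)^2 / 3
    + (2 / 3) * (deriv (deriv (deriv θ)) u / deriv θ u)
    - (deriv (deriv θ) u / deriv θ u)^2)

theorem phaseCurvature_const_mul (b u : ℝ) : phaseCurvature (fun u => b * u) u = b^2 / 12 := by
  have hderiv : deriv (fun u : ℝ => b * u) = fun _ => b := by
    funext x
    simp [((hasDerivAt_id' x).const_mul b).deriv]
  simp only [phaseCurvature, hderiv, deriv_const']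
  ring

noncomputable def curvatureFirstIntegral (c : ℝ) (f : ℝ → ℝ) (u : ℝ) : ℝ :=
  (deriv f u)^2 / (f u)^3 + 12 * c / f u + f u

theorem hasDerivAt_curvatureFirstIntegral {θ : ℝ → ℝ} {c u : ℝ}
    (hθ' : DifferentiableAt ℝ (deriv θ) u) (hθ'' : DifferentiableAt ℝ (deriv (deriv θ)) u)
    (hθ'0 : deriv θ u ≠ 0) (hω : phaseCurvature θ u = c) :
    HasDerivAt (curvatureFirstIntegral c (deriv θ)) 0 u := by
  have hode : 2 * deriv (deriv (deriv θ)) u * deriv θ u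
      = 12 * c * (deriv θ u)^2 - (deriv θ u)^4 + 3 * (deriv (deriv θ) u)^2 := by
    simp only [phaseCurvature] at hω
    field_simp at hω
    linear_combination hω
  have hsum := ((hθ''.hasDerivAt.pow 2).div (hθ'.hasDerivAt.pow 3) (pow_ne_zero 3 hθ'0)).add
    ((hasDerivAt_const u (12 * c)).div hθ'.hasDerivAt hθ'0) |>.add hθ'.hasDerivAt
  refine hsum.congr_deriv ?_
  simp only [Pi.pow_apply, Nat.cast_ofNat, Nat.add_one_sub_one, pow_one]
  field_simp
  linear_combination deriv (deriv θ) u * hode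

theorem eq_of_sq_div_cube_add_sq_div_add_eq {x y s : ℝ} (hx : 0 < x)
    (h : y^2 / x^3 + s^2 / x + x = 2 * s) : x = s := by
  have hsum : y^2 + x^2 * (x - s)^2 = 0 := by
    field_simp at h
    linear_combination h
  have hxs : x^2 * (x - s)^2 = 0 := by nlinarith [sq_nonneg y, sq_nonneg (x * (x - s))]
  rcases mul_eq_zero.mp hxs with h0 | h0
  · exact absurd (pow_eq_zero_iff two_ne_zero |>.mp h0) hx.ne'
  · exact sub_eq_zero.mp (pow_eq_zero_iff two_ne_zero |>.mp h0)

theorem eq_add_mul_of_deriv_eq {θ : ℝ → ℝ} {s : ℝ} (hθ : Differentiable ℝ θ)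
    (hθ' : ∀ u, deriv θ u = s) (u : ℝ) : θ u = θ 0 + s * u := by
  have hzero : ∀ x, HasDerivAt (fun x => θ x - s * x) 0 x := fun x =>
    ((hθ x).hasDerivAt.sub ((hasDerivAt_id' x).const_mul s)).congr_deriv (by rw [hθ' x]; ring)
  have := is_const_of_deriv_eq_zero (fun x => (hzero x).differentiableAt)
    (fun x => (hzero x).deriv) u 0
  simp only [mul_zero, sub_zero] at this
  linarith

theorem deriv_eq_of_phaseCurvature_eq {θ : ℝ → ℝ} {c : ℝ} (hc : 0 ≤ c) (hθ : ContDiff ℝ 3 θ)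
    (hpos : ∀ u, 0 < deriv θ u) (hω : ∀ u, phaseCurvature θ u = c)
    (hθ''0 : deriv (deriv θ) 0 = 0) (hθ'0 : deriv θ 0 = √(12 * c)) (u : ℝ) :
    deriv θ u = √(12 * c) := by
  have hθ' : ContDiff ℝ 2 (deriv θ) := hθ.deriv'
  have hθ'' : ContDiff ℝ 1 (deriv (deriv θ)) := hθ'.deriv'
  have hE : ∀ v, HasDerivAt (curvatureFirstIntegral c (deriv θ)) 0 v := fun v =>
    hasDerivAt_curvatureFirstIntegral (hθ'.differentiable two_ne_zero v)
      (hθ''.differentiable one_ne_zero v) (hpos v).ne' (hω v)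
  have hEu := is_const_of_deriv_eq_zero (fun v => (hE v).differentiableAt)
    (fun v => (hE v).deriv) u 0
  have hs : √(12 * c) ^ 2 = 12 * c := sq_sqrt (by positivity)
  refine eq_of_sq_div_cube_add_sq_div_add_eq (y := deriv (deriv θ) u) (hpos u) ?_
  have hs0 : 0 < √(12 * c) := hθ'0 ▸ hpos 0
  simp only [curvatureFirstIntegral, hθ'0, hθ''0] at hEu
  rw [hs, hEu]
  field_simp
  linear_combination -√(12 * c) ^ 2 * hs

/-- (1) A linear phase `θ(u) = b u` with `b > 0` has constant curvature function
`ω(u) = b²/12`. (2) Conversely, a `C³` phase with positive derivative, constant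
curvature `c > 0`, and initial data `θ''(0) = 0`, `θ'(0) = √(12c)` is linear:
`θ(u) = θ(0) + √(12c) u`. -/
theorem stmt15 :
    (∀ b : ℝ, 0 < b → ∀ θ : ℝ → ℝ, θ = (fun u => b * u) →
      ∀ u : ℝ,
        (1 / 4) * ((deriv θ u)^2 / 3
          + (2 / 3) * (deriv (deriv (deriv θ)) u / deriv θ u)
          - (deriv (deriv θ) u / deriv θ u)^2) = b^2 / 12) ∧
    (∀ (θ : ℝ → ℝ) (c : ℝ), 0 < c → ContDiff ℝ 3 θ → (∀ u, 0 < deriv θ u) →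
      (∀ u : ℝ,
        (1 / 4) * ((deriv θ u)^2 / 3
          + (2 / 3) * (deriv (deriv (deriv θ)) u / deriv θ u)
          - (deriv (deriv θ) u / deriv θ u)^2) = c) →
      deriv (deriv θ) 0 = 0 → deriv θ 0 = Real.sqrt (12 * c) →
      ∀ u : ℝ, θ u = θ 0 + Real.sqrt (12 * c) * u) := by
  refine ⟨fun b _ θ hθ u => hθ ▸ phaseCurvature_const_mul b u, ?_⟩
  intro θ c hc hθ hpos hω hθ''0 hθ'0
  exact eq_add_mul_of_deriv_eq (hθ.differentiable three_ne_zero)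
    (deriv_eq_of_phaseCurvature_eq hc.le hθ hpos hω hθ''0 hθ'0)
end

section
/- Let b ≥ 0, γ ∈ ℂ with |γ| = 1, and (λ_k)_{k=1}^N (N finite or infinite) a sequence in the open upper half-plane with no finite accumulation point and satisfying ∑_k Im(λ_k)/|λ_k|² < ∞ (all λ_k ≠ 0). Then the product B(λ) = γ·e^{ibλ}·∏_k (conj(λ_k)/λ_k)·(λ-λ_k)/(λ-conj(λ_k)) converges locally uniformly on ℂ minus the closure of {conj(λ_k)} to a meromorphic function on ℂ satisfying |B(u)| = 1 for all u ∈ ℝ not a pole, and |B(λ)| < 1 for Im λ > 0 (assuming b > 0 or N ≥ 1). -/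
/-!
The normalised factor `b_l z = (conj l / l) (z - l) / (z - conj l)` satisfies
`b_l z - 1 = z (conj l - l) / (l (z - conj l))`, so on a compact set of radius `R` at distance
`δ` from the poles, `‖b_l z - 1‖ ≤ 2R (1 + R/δ) Im l / ‖l‖²`. The Blaschke condition then makes
`∏ (1 + (b_l - 1))` converge locally uniformly, and holomorphy passes to the limit. Each factor is
unimodular on `ℝ` and has modulus `< 1` on the upper half-plane, while `‖e^{ibz}‖ = e^{-b Im z}`;
these bounds pass to the infinite product through the norms of its partial products.
-/

open Complex Filter Topology ComplexConjugate

noncomputable def blaschkeFactor (l z : ℂ) : ℂ := conj l / l * ((z - l) / (z - conj l))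

lemma blaschkeFactor_sub_one {l z : ℂ} (hl : l ≠ 0) (hz : z ≠ conj l) :
    blaschkeFactor l z - 1 = z * (conj l - l) / (l * (z - conj l)) := by
  have hz' : z - conj l ≠ 0 := sub_ne_zero.mpr hz
  rw [blaschkeFactor]
  field_simp
  ring

lemma norm_conj_sub_self (l : ℂ) : ‖conj l - l‖ = 2 * |l.im| := by
  rw [norm_sub_rev, Complex.sub_conj, norm_mul, Complex.norm_I, mul_one, Complex.norm_real,
    Real.norm_eq_abs, abs_mul, abs_two]

lemma norm_blaschkeFactor_sub_one_le {l z : ℂ} {R δ : ℝ} (hl : 0 < l.im) (hδ : 0 < δ)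
    (hzR : ‖z‖ ≤ R) (hzδ : δ ≤ ‖z - conj l‖) :
    ‖blaschkeFactor l z - 1‖ ≤ 2 * R * (1 + R / δ) * (l.im / ‖l‖ ^ 2) := by
  have hl0 : l ≠ 0 := fun h => by simp [h] at hl
  have hD : 0 < ‖z - conj l‖ := hδ.trans_le hzδ
  have hz : z ≠ conj l := fun h => by simp [h] at hD
  have hR : 0 ≤ R := (norm_nonneg z).trans hzR
  have hratio : ‖l‖ / ‖z - conj l‖ ≤ 1 + R / δ := by
    rw [div_le_iff₀ hD]
    calc ‖l‖ = ‖conj l‖ := (Complex.norm_conj l).symm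
      _ ≤ ‖z - conj l‖ + ‖z‖ := by
          linarith [norm_sub_norm_le (conj l) z, norm_sub_rev (conj l) z]
      _ ≤ ‖z - conj l‖ + R := by gcongr
      _ ≤ ‖z - conj l‖ + R / δ * ‖z - conj l‖ := by
          gcongr
          calc R = R / δ * δ := by field_simp
            _ ≤ R / δ * ‖z - conj l‖ := by gcongr
      _ = _ := by ring
  rw [blaschkeFactor_sub_one hl0 hz, norm_div, norm_mul, norm_mul, norm_conj_sub_self,
    abs_of_pos hl]
  calc ‖z‖ * (2 * l.im) / (‖l‖ * ‖z - conj l‖)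
      = 2 * ‖z‖ * (‖l‖ / ‖z - conj l‖) * (l.im / ‖l‖ ^ 2) := by field_simp
    _ ≤ 2 * R * (1 + R / δ) * (l.im / ‖l‖ ^ 2) := by gcongr

lemma norm_blaschkeFactor_ofReal {l : ℂ} (hl : l.im ≠ 0) (u : ℝ) :
    ‖blaschkeFactor l u‖ = 1 := by
  have hl0 : l ≠ 0 := fun h => by simp [h] at hl
  have hu : (u : ℂ) - l ≠ 0 := fun h => hl (by simpa using congrArg Complex.im h)
  have hconj : ‖(u : ℂ) - conj l‖ = ‖(u : ℂ) - l‖ := by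
    rw [← Complex.norm_conj, map_sub, Complex.conj_ofReal, Complex.conj_conj]
  rw [blaschkeFactor, norm_mul, norm_div, norm_div, Complex.norm_conj, hconj,
    div_self (norm_ne_zero_iff.mpr hl0), div_self (norm_ne_zero_iff.mpr hu), one_mul]

lemma norm_sub_lt_norm_sub_conj {l z : ℂ} (hl : 0 < l.im) (hz : 0 < z.im) :
    ‖z - l‖ < ‖z - conj l‖ := by
  rw [← sq_lt_sq₀ (norm_nonneg _) (norm_nonneg _), Complex.sq_norm, Complex.sq_norm,
    Complex.normSq_apply, Complex.normSq_apply]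
  simp only [Complex.sub_re, Complex.sub_im, Complex.conj_re, Complex.conj_im]
  nlinarith [mul_pos hl hz]

lemma norm_blaschkeFactor_lt_one {l z : ℂ} (hl : 0 < l.im) (hz : 0 < z.im) :
    ‖blaschkeFactor l z‖ < 1 := by
  have hl0 : l ≠ 0 := fun h => by simp [h] at hl
  have hlt := norm_sub_lt_norm_sub_conj hl hz
  rw [blaschkeFactor, norm_mul, norm_div, norm_div, Complex.norm_conj,
    div_self (norm_ne_zero_iff.mpr hl0), one_mul, div_lt_one ((norm_nonneg _).trans_lt hlt)]
  exact hlt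

lemma differentiableOn_blaschkeFactor (l : ℂ) : DifferentiableOn ℂ (blaschkeFactor l) {conj l}ᶜ :=
  (differentiableOn_const _).mul <| (differentiableOn_id.sub_const l).div
    (differentiableOn_id.sub_const (conj l)) fun _ hz => sub_ne_zero.mpr hz

lemma differentiableOn_blaschkeFactor_compl_closure {ι : Type*} (lam : ι → ℂ) (i : ι) :
    DifferentiableOn ℂ (blaschkeFactor (lam i)) (closure (Set.range fun i => conj (lam i)))ᶜ :=
  (differentiableOn_blaschkeFactor _).mono fun _ hz h =>
    hz (subset_closure ⟨i, (Set.mem_singleton_iff.mp h).symm⟩)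

lemma exists_norm_blaschkeFactor_sub_one_le {ι : Type*} {lam : ι → ℂ} (him : ∀ i, 0 < (lam i).im)
    {K : Set ℂ} (hK : IsCompact K) (hKS : K ⊆ (closure (Set.range fun i => conj (lam i)))ᶜ) :
    ∃ C : ℝ, ∀ i, ∀ z ∈ K, ‖blaschkeFactor (lam i) z - 1‖ ≤ C * ((lam i).im / ‖lam i‖ ^ 2) := by
  obtain ⟨R, -, hR⟩ := hK.isBounded.exists_pos_norm_le
  obtain ⟨δ, hδ, hdist⟩ := Metric.exists_pos_forall_lt_edist hK isClosed_closure
    (Set.subset_compl_iff_disjoint_right.mp hKS)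
  refine ⟨2 * R * (1 + R / δ), fun i z hz => norm_blaschkeFactor_sub_one_le (him i) hδ (hR z hz) ?_⟩
  have := hdist z hz (conj (lam i)) (subset_closure ⟨i, rfl⟩)
  rw [edist_nndist, ENNReal.coe_lt_coe, ← NNReal.coe_lt_coe, coe_nndist, dist_eq_norm] at this
  exact this.le

lemma hasProdLocallyUniformlyOn_blaschkeFactor {ι : Type*} {lam : ι → ℂ}
    (him : ∀ i, 0 < (lam i).im) (hBl : Summable fun i => (lam i).im / ‖lam i‖ ^ 2) :
    HasProdLocallyUniformlyOn (fun i => blaschkeFactor (lam i))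
      (fun z => ∏' i, blaschkeFactor (lam i) z) (closure (Set.range fun i => conj (lam i)))ᶜ := by
  refine hasProdLocallyUniformlyOn_of_forall_compact isClosed_closure.isOpen_compl
    fun K hKS hK => ?_
  obtain ⟨C, hC⟩ := exists_norm_blaschkeFactor_sub_one_le him hK hKS
  have hcont : ∀ i, ContinuousOn (blaschkeFactor (lam i)) K := fun i =>
    (differentiableOn_blaschkeFactor_compl_closure lam i).continuousOn.mono hKS
  simpa using (hBl.mul_left C).hasProdUniformlyOn_one_add hK
    (f := fun i z => blaschkeFactor (lam i) z - 1) (.of_forall fun i z hz => hC i z hz)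
    fun i => (hcont i).sub continuousOn_const

lemma HasProd.le_of_le_one {ι : Type*} {f : ι → ℝ} {a : ℝ} (hf : HasProd f a)
    (h0 : ∀ i, 0 ≤ f i) (h1 : ∀ i, f i ≤ 1) (i : ι) : a ≤ f i := by
  classical
  refine le_of_tendsto hf ((eventually_ge_atTop {i}).mono fun s hs => ?_)
  rw [← Finset.mul_prod_erase s f (Finset.singleton_subset_iff.mp hs)]
  exact mul_le_of_le_one_right (h0 i) (Finset.prod_le_one (fun j _ => h0 j) fun j _ => h1 j)

lemma tendstoLocallyUniformlyOn_const {α β ι : Type*} [TopologicalSpace α] [UniformSpace β]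
    (g : α → β) (p : Filter ι) (s : Set α) : TendstoLocallyUniformlyOn (fun _ => g) g p s :=
  fun _ hu _ _ => ⟨s, self_mem_nhdsWithin, .of_forall fun _ _ _ => refl_mem_uniformity hu⟩

lemma norm_cexp_I_mul_mul (b : ℝ) (z : ℂ) : ‖cexp (I * b * z)‖ = Real.exp (-(b * z.im)) := by
  rw [Complex.norm_exp]
  congr 1
  simp [Complex.mul_re]

lemma closure_range_conj_subset_im_nonpos {ι : Type*} {lam : ι → ℂ} (him : ∀ i, 0 ≤ (lam i).im) :
    closure (Set.range fun i => conj (lam i)) ⊆ {w : ℂ | w.im ≤ 0} :=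
  closure_minimal (Set.range_subset_iff.mpr fun i => by simpa using him i)
    (isClosed_le Complex.continuous_im continuous_const)

theorem stmt18_general (b : ℝ) (hb : 0 ≤ b) (γ : ℂ) (hγ : ‖γ‖ = 1)
    (lam : ℕ → ℂ) (him : ∀ k, 0 < (lam k).im)
    (hBl : Summable (fun k => (lam k).im / ‖lam k‖^2))
    (S : Set ℂ)
    (hS : S = (closure (Set.range fun k => (starRingEnd ℂ) (lam k)))ᶜ) :
    ∃ B : ℂ → ℂ,
      TendstoLocallyUniformlyOn
        (fun (n : ℕ) (z : ℂ) =>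
          γ * Complex.exp (Complex.I * b * z) *
            ∏ k ∈ Finset.range n,
              ((starRingEnd ℂ) (lam k) / lam k) *
                ((z - lam k) / (z - (starRingEnd ℂ) (lam k))))
        B atTop S ∧
      DifferentiableOn ℂ B S ∧
      (∀ u : ℝ, (u : ℂ) ∈ S → ‖B (u : ℂ)‖ = 1) ∧
      (∀ z : ℂ, 0 < z.im → ‖B z‖ < 1) := by
  have hSo : IsOpen S := hS ▸ isClosed_closure.isOpen_compl
  set P : ℂ → ℂ := fun z => ∏' k, blaschkeFactor (lam k) z
  set g : ℂ → ℂ := fun z => γ * cexp (I * b * z)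
  have hprod := hasProdLocallyUniformlyOn_blaschkeFactor him hBl
  rw [← hS] at hprod
  have hpartial := hprod.tendstoLocallyUniformlyOn_finsetRange
  have hPd : DifferentiableOn ℂ P S := hpartial.differentiableOn (.of_forall fun n =>
    .fun_finsetProd fun i _ => hS ▸ differentiableOn_blaschkeFactor_compl_closure lam i) hSo
  have hg : Differentiable ℂ g := by fun_prop
  refine ⟨g * P, ?_, hg.differentiableOn.mul hPd, fun u hu => ?_, fun z hz => ?_⟩
  · exact (tendstoLocallyUniformlyOn_const g atTop S).fun_mul₀ hpartial
      hg.continuous.continuousOn hPd.continuousOn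
  · have h1 : HasProd (fun _ : ℕ => (1 : ℝ)) ‖P u‖ := by
      simpa [norm_blaschkeFactor_ofReal (him _).ne'] using (hprod.hasProd hu).norm
    simp [g, hγ, norm_cexp_I_mul_mul, h1.unique hasProd_one]
  · have hzS : z ∈ S := hS ▸ fun h =>
      (closure_range_conj_subset_im_nonpos (fun k => (him k).le) h).not_gt hz
    have hP : ‖P z‖ < 1 := ((hprod.hasProd hzS).norm.le_of_le_one (fun _ => norm_nonneg _)
      (fun k => (norm_blaschkeFactor_lt_one (him k) hz).le) 0).trans_lt
      (norm_blaschkeFactor_lt_one (him 0) hz)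
    have hg1 : ‖g z‖ ≤ 1 := by
      simp only [g, norm_mul, hγ, one_mul, norm_cexp_I_mul_mul, Real.exp_le_one_iff]
      nlinarith
    calc ‖(g * P) z‖ = ‖g z‖ * ‖P z‖ := norm_mul _ _
      _ < 1 := mul_lt_one_of_nonneg_of_lt_one_right hg1 (norm_nonneg _) hP

/-- Convergence of the Blaschke product for the upper half-plane: under the Blaschke
condition, the partial products of
`B(λ) = γ e^{ibλ} ∏_k (conj λ_k / λ_k)(λ - λ_k)/(λ - conj λ_k)`
converge locally uniformly on the complement of the closure of `{conj λ_k}` to a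
holomorphic function there which is unimodular on `ℝ` (off the poles) and of modulus
`< 1` on the upper half-plane. -/
theorem stmt18 (b : ℝ) (hb : 0 ≤ b) (γ : ℂ) (hγ : ‖γ‖ = 1)
    (lam : ℕ → ℂ) (him : ∀ k, 0 < (lam k).im) (hne : ∀ k, lam k ≠ 0)
    (hacc : Tendsto (fun k => ‖lam k‖) atTop atTop)
    (hBl : Summable (fun k => (lam k).im / ‖lam k‖^2))
    (S : Set ℂ)
    (hS : S = (closure (Set.range fun k => (starRingEnd ℂ) (lam k)))ᶜ) :
    ∃ B : ℂ → ℂ,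
      TendstoLocallyUniformlyOn
        (fun (n : ℕ) (z : ℂ) =>
          γ * Complex.exp (Complex.I * b * z) *
            ∏ k ∈ Finset.range n,
              ((starRingEnd ℂ) (lam k) / lam k) *
                ((z - lam k) / (z - (starRingEnd ℂ) (lam k))))
        B atTop S ∧
      DifferentiableOn ℂ B S ∧
      (∀ u : ℝ, (u : ℂ) ∈ S → ‖B (u : ℂ)‖ = 1) ∧
      (∀ z : ℂ, 0 < z.im → ‖B z‖ < 1) :=
  stmt18_general b hb γ hγ lam him hBl S hS
end
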